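/- [σ^{(1)}(f), σ^{(3)}(g)] = σ^{(1)}((1/3) f g' − f' g) and [σ^{(2)}(f), σ^{(3)}(g)] = σ^{(2)}((2/3) f g' − f' g), for the vector fields σ^{(1)}(f) = −(1/6)f' + f u_x, σ^{(2)}(f) = −(1/12)f'' y + (1/2) f' y u_x + f u_y, σ^{(3)}(g) = −(1/36)g''' y² + g''((1/6)y² u_x − (1/18)x) + g'((2/3)u + (2/3)y u_y + (1/3)x u_x) + g u_t, under the bracket [A,B](u) = A'(u)[B(u)] − B'(u)[A(u)]. -/

import Mathlib

/-- `x`-partial derivative of a function of `(x, y, t)`. -/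
noncomputable def px (u : ℝ × ℝ × ℝ → ℝ) (p : ℝ × ℝ × ℝ) : ℝ :=
  deriv (fun s => u (s, p.2.1, p.2.2)) p.1

/-- `y`-partial derivative. -/
noncomputable def py (u : ℝ × ℝ × ℝ → ℝ) (p : ℝ × ℝ × ℝ) : ℝ :=
  deriv (fun s => u (p.1, s, p.2.2)) p.2.1

/-- `t`-partial derivative. -/
noncomputable def pt (u : ℝ × ℝ × ℝ → ℝ) (p : ℝ × ℝ × ℝ) : ℝ :=
  deriv (fun s => u (p.1, p.2.1, s)) p.2.2

/-- `σ^{(1)}(f)(u) = −(1/6)f' + f·u_x`. -/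
noncomputable def sigma1 (f : ℝ → ℝ) (u : ℝ × ℝ × ℝ → ℝ) (p : ℝ × ℝ × ℝ) : ℝ :=
  -(1 / 6) * deriv f p.2.2 + f p.2.2 * px u p

/-- `σ^{(2)}(f)(u) = −(1/12)f''·y + (1/2)f'·y·u_x + f·u_y`. -/
noncomputable def sigma2 (f : ℝ → ℝ) (u : ℝ × ℝ × ℝ → ℝ) (p : ℝ × ℝ × ℝ) : ℝ :=
  -(1 / 12) * deriv (deriv f) p.2.2 * p.2.1 +
    (1 / 2) * deriv f p.2.2 * p.2.1 * px u p + f p.2.2 * py u p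

/-- `σ^{(3)}(g)(u) = −(1/36)g'''·y² + g''((1/6)y²·u_x − (1/18)x)
+ g'((2/3)u + (2/3)y·u_y + (1/3)x·u_x) + g·u_t`. -/
noncomputable def sigma3 (g : ℝ → ℝ) (u : ℝ × ℝ × ℝ → ℝ) (p : ℝ × ℝ × ℝ) : ℝ :=
  -(1 / 36) * deriv (deriv (deriv g)) p.2.2 * p.2.1 ^ 2 +
    deriv (deriv g) p.2.2 * ((1 / 6) * p.2.1 ^ 2 * px u p - (1 / 18) * p.1) +
    deriv g p.2.2 *
      ((2 / 3) * u p + (2 / 3) * p.2.1 * py u p + (1 / 3) * p.1 * px u p) +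
    g p.2.2 * pt u p

/-- The bracket `[A,B](u) = A'(u)[B(u)] − B'(u)[A(u)]` of `u`-dependent fields,
with Gateaux derivative `A'(u)[B] = d/dδ|₀ A(u + δB)`. -/
noncomputable def gBracket (A B : (ℝ × ℝ × ℝ → ℝ) → ℝ × ℝ × ℝ → ℝ)
    (u : ℝ × ℝ × ℝ → ℝ) (p : ℝ × ℝ × ℝ) : ℝ :=
  deriv (fun δ : ℝ => A (fun q => u q + δ * B u q) p) 0 -
    deriv (fun δ : ℝ => B (fun q => u q + δ * A u q) p) 0

/- ### Auxiliary machinery -/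

/-- directional derivative -/
noncomputable def Dv (v : ℝ × ℝ × ℝ) (u : ℝ × ℝ × ℝ → ℝ) : ℝ × ℝ × ℝ → ℝ :=
  fun q => fderiv ℝ u q v

lemma contDiff_Dv {u : ℝ × ℝ × ℝ → ℝ} (hu : ContDiff ℝ (⊤ : ℕ∞) u) (v : ℝ × ℝ × ℝ) :
    ContDiff ℝ (⊤ : ℕ∞) (Dv v u) :=
  (hu.fderiv_right (by simp)).clm_apply contDiff_const

lemma sliceX {v : ℝ × ℝ × ℝ → ℝ} (hv : Differentiable ℝ v) (p : ℝ × ℝ × ℝ) :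
    HasDerivAt (fun s => v (s, p.2.1, p.2.2)) (Dv (1, 0, 0) v p) p.1 := by
  have h1 : HasDerivAt (fun s : ℝ => ((s, p.2.1, p.2.2) : ℝ × ℝ × ℝ)) (1, 0, 0) p.1 :=
    HasDerivAt.prodMk (hasDerivAt_id p.1) (HasDerivAt.prodMk (hasDerivAt_const p.1 p.2.1) (hasDerivAt_const p.1 p.2.2))
  exact (hv p).hasFDerivAt.comp_hasDerivAt p.1 h1

lemma sliceY {v : ℝ × ℝ × ℝ → ℝ} (hv : Differentiable ℝ v) (p : ℝ × ℝ × ℝ) :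
    HasDerivAt (fun s => v (p.1, s, p.2.2)) (Dv (0, 1, 0) v p) p.2.1 := by
  have h1 : HasDerivAt (fun s : ℝ => ((p.1, s, p.2.2) : ℝ × ℝ × ℝ)) (0, 1, 0) p.2.1 :=
    HasDerivAt.prodMk (hasDerivAt_const _ p.1) (HasDerivAt.prodMk (hasDerivAt_id p.2.1) (hasDerivAt_const _ p.2.2))
  exact (hv p).hasFDerivAt.comp_hasDerivAt p.2.1 h1

lemma sliceT {v : ℝ × ℝ × ℝ → ℝ} (hv : Differentiable ℝ v) (p : ℝ × ℝ × ℝ) :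
    HasDerivAt (fun s => v (p.1, p.2.1, s)) (Dv (0, 0, 1) v p) p.2.2 := by
  have h1 : HasDerivAt (fun s : ℝ => ((p.1, p.2.1, s) : ℝ × ℝ × ℝ)) (0, 0, 1) p.2.2 :=
    HasDerivAt.prodMk (hasDerivAt_const _ p.1) (HasDerivAt.prodMk (hasDerivAt_const _ p.2.1) (hasDerivAt_id p.2.2))
  exact (hv p).hasFDerivAt.comp_hasDerivAt p.2.2 h1

lemma px_eq {v : ℝ × ℝ × ℝ → ℝ} (hv : Differentiable ℝ v) (p : ℝ × ℝ × ℝ) :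
    px v p = Dv (1, 0, 0) v p := (sliceX hv p).deriv
lemma py_eq {v : ℝ × ℝ × ℝ → ℝ} (hv : Differentiable ℝ v) (p : ℝ × ℝ × ℝ) :
    py v p = Dv (0, 1, 0) v p := (sliceY hv p).deriv
lemma pt_eq {v : ℝ × ℝ × ℝ → ℝ} (hv : Differentiable ℝ v) (p : ℝ × ℝ × ℝ) :
    pt v p = Dv (0, 0, 1) v p := (sliceT hv p).deriv

lemma Dv_symm {u : ℝ × ℝ × ℝ → ℝ} (hu : ContDiff ℝ (⊤ : ℕ∞) u) (p v w : ℝ × ℝ × ℝ) :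
    Dv v (Dv w u) p = Dv w (Dv v u) p := by
  have hd : DifferentiableAt ℝ (fderiv ℝ u) p :=
    ((hu.fderiv_right (m := (⊤ : ℕ∞)) (by simp)).differentiable (by simp)) p
  have key : ∀ a : ℝ × ℝ × ℝ, fderiv ℝ (Dv a u) p =
      (fderiv ℝ (fderiv ℝ u) p).flip a := by
    intro a
    have : fderiv ℝ (fun q => (fderiv ℝ u q) ((fun _ => a) q)) p =
        (fderiv ℝ u p).comp (fderiv ℝ (fun _ => a) p) +
          (fderiv ℝ (fderiv ℝ u) p).flip a :=
      fderiv_clm_apply hd (differentiableAt_const a)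
    simp at this
    exact this
  show fderiv ℝ (Dv w u) p v = fderiv ℝ (Dv v u) p w
  rw [key w, key v]
  exact second_derivative_symmetric (fun y => ((hu.differentiable (by simp)) y).hasFDerivAt)
    hd.hasFDerivAt v w

lemma deriv_affine (c m : ℝ) : deriv (fun δ : ℝ => c + δ * m) 0 = m := by
  have h : HasDerivAt (fun δ : ℝ => c + δ * m) (1 * m) 0 :=
    ((hasDerivAt_id (0 : ℝ)).mul_const m).const_add c
  simp only [one_mul] at h
  exact h.deriv

section Gateaux
variable {u w : ℝ × ℝ × ℝ → ℝ}

lemma px_add_smul (hu : Differentiable ℝ u) (hw : Differentiable ℝ w) (δ : ℝ) (p : ℝ × ℝ × ℝ) :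
    px (fun q => u q + δ * w q) p = Dv (1,0,0) u p + δ * Dv (1,0,0) w p :=
  ((sliceX hu p).add ((sliceX hw p).const_mul δ)).deriv

lemma py_add_smul (hu : Differentiable ℝ u) (hw : Differentiable ℝ w) (δ : ℝ) (p : ℝ × ℝ × ℝ) :
    py (fun q => u q + δ * w q) p = Dv (0,1,0) u p + δ * Dv (0,1,0) w p :=
  ((sliceY hu p).add ((sliceY hw p).const_mul δ)).deriv

lemma pt_add_smul (hu : Differentiable ℝ u) (hw : Differentiable ℝ w) (δ : ℝ) (p : ℝ × ℝ × ℝ) :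
    pt (fun q => u q + δ * w q) p = Dv (0,0,1) u p + δ * Dv (0,0,1) w p :=
  ((sliceT hu p).add ((sliceT hw p).const_mul δ)).deriv

lemma gateaux_sigma1 (hu : Differentiable ℝ u) (hw : Differentiable ℝ w) (f : ℝ → ℝ)
    (p : ℝ × ℝ × ℝ) :
    deriv (fun δ : ℝ => sigma1 f (fun q => u q + δ * w q) p) 0 =
      f p.2.2 * Dv (1,0,0) w p := by
  have key : (fun δ : ℝ => sigma1 f (fun q => u q + δ * w q) p) =
      fun δ : ℝ => sigma1 f u p + δ * (f p.2.2 * Dv (1,0,0) w p) := by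
    funext δ
    simp only [sigma1, px_add_smul hu hw, px_eq hu]
    ring
  rw [key, deriv_affine]

lemma gateaux_sigma2 (hu : Differentiable ℝ u) (hw : Differentiable ℝ w) (f : ℝ → ℝ)
    (p : ℝ × ℝ × ℝ) :
    deriv (fun δ : ℝ => sigma2 f (fun q => u q + δ * w q) p) 0 =
      (1/2) * deriv f p.2.2 * p.2.1 * Dv (1,0,0) w p + f p.2.2 * Dv (0,1,0) w p := by
  have key : (fun δ : ℝ => sigma2 f (fun q => u q + δ * w q) p) =
      fun δ : ℝ => sigma2 f u p +
        δ * ((1/2) * deriv f p.2.2 * p.2.1 * Dv (1,0,0) w p + f p.2.2 * Dv (0,1,0) w p) := by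
    funext δ
    simp only [sigma2, px_add_smul hu hw, py_add_smul hu hw, px_eq hu, py_eq hu]
    ring
  rw [key, deriv_affine]

lemma gateaux_sigma3 (hu : Differentiable ℝ u) (hw : Differentiable ℝ w) (g : ℝ → ℝ)
    (p : ℝ × ℝ × ℝ) :
    deriv (fun δ : ℝ => sigma3 g (fun q => u q + δ * w q) p) 0 =
      deriv (deriv g) p.2.2 * ((1/6) * p.2.1 ^ 2 * Dv (1,0,0) w p) +
        deriv g p.2.2 * ((2/3) * w p + (2/3) * p.2.1 * Dv (0,1,0) w p +
          (1/3) * p.1 * Dv (1,0,0) w p) +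
        g p.2.2 * Dv (0,0,1) w p := by
  have key : (fun δ : ℝ => sigma3 g (fun q => u q + δ * w q) p) =
      fun δ : ℝ => sigma3 g u p +
        δ * (deriv (deriv g) p.2.2 * ((1/6) * p.2.1 ^ 2 * Dv (1,0,0) w p) +
          deriv g p.2.2 * ((2/3) * w p + (2/3) * p.2.1 * Dv (0,1,0) w p +
            (1/3) * p.1 * Dv (1,0,0) w p) +
          g p.2.2 * Dv (0,0,1) w p) := by
    funext δ
    simp only [sigma3, px_add_smul hu hw, py_add_smul hu hw, pt_add_smul hu hw,
      px_eq hu, py_eq hu, pt_eq hu]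
    ring
  rw [key, deriv_affine]

end Gateaux

lemma deriv_smooth {f : ℝ → ℝ} (hf : ContDiff ℝ (⊤ : ℕ∞) f) : ContDiff ℝ (⊤ : ℕ∞) (deriv f) := by
  have h1 : ContDiff ℝ (((⊤ : ℕ∞) : WithTop ℕ∞) + 1) f := by
    rw [show (((⊤ : ℕ∞) : WithTop ℕ∞) + 1) = ((⊤ : ℕ∞) : WithTop ℕ∞) from rfl]; exact hf
  exact (contDiff_succ_iff_deriv.mp h1).2.2

/- ### Partial derivatives of the vector fields -/

section Partials
variable {u : ℝ × ℝ × ℝ → ℝ} {f g : ℝ → ℝ}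

lemma w1_eq (hu : ContDiff ℝ (⊤ : ℕ∞) u) (f : ℝ → ℝ) :
    sigma1 f u = fun q =>
      -(1 / 6) * deriv f q.2.2 + f q.2.2 * Dv (1,0,0) u q :=
  funext fun q => by simp only [sigma1, px_eq (hu.differentiable (by simp))]

lemma w2_eq (hu : ContDiff ℝ (⊤ : ℕ∞) u) (f : ℝ → ℝ) :
    sigma2 f u = fun q =>
      -(1 / 12) * deriv (deriv f) q.2.2 * q.2.1 +
        (1 / 2) * deriv f q.2.2 * q.2.1 * Dv (1,0,0) u q + f q.2.2 * Dv (0,1,0) u q :=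
  funext fun q => by
    simp only [sigma2, px_eq (hu.differentiable (by simp)), py_eq (hu.differentiable (by simp))]

lemma w3_eq (hu : ContDiff ℝ (⊤ : ℕ∞) u) (g : ℝ → ℝ) :
    sigma3 g u = fun q =>
      -(1 / 36) * deriv (deriv (deriv g)) q.2.2 * q.2.1 ^ 2 +
        deriv (deriv g) q.2.2 * ((1 / 6) * q.2.1 ^ 2 * Dv (1,0,0) u q - (1 / 18) * q.1) +
        deriv g q.2.2 *
          ((2 / 3) * u q + (2 / 3) * q.2.1 * Dv (0,1,0) u q + (1 / 3) * q.1 * Dv (1,0,0) u q) +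
        g q.2.2 * Dv (0,0,1) u q :=
  funext fun q => by
    simp only [sigma3, px_eq (hu.differentiable (by simp)), py_eq (hu.differentiable (by simp)),
      pt_eq (hu.differentiable (by simp))]

lemma px_w1 (hu : ContDiff ℝ (⊤ : ℕ∞) u) (f : ℝ → ℝ) (p : ℝ × ℝ × ℝ) :
    px (sigma1 f u) p = f p.2.2 * Dv (1,0,0) (Dv (1,0,0) u) p := by
  have dA1 := (contDiff_Dv hu (1,0,0)).differentiable (by simp)
  unfold px
  rw [w1_eq hu f]
  refine (((sliceX dA1 p).const_mul (f p.2.2)).const_add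
    (-(1 / 6) * deriv f p.2.2)).deriv.trans ?_
  simp only [Prod.mk.eta]

lemma py_w1 (hu : ContDiff ℝ (⊤ : ℕ∞) u) (f : ℝ → ℝ) (p : ℝ × ℝ × ℝ) :
    py (sigma1 f u) p = f p.2.2 * Dv (0,1,0) (Dv (1,0,0) u) p := by
  have dA1 := (contDiff_Dv hu (1,0,0)).differentiable (by simp)
  unfold py
  rw [w1_eq hu f]
  refine (((sliceY dA1 p).const_mul (f p.2.2)).const_add
    (-(1 / 6) * deriv f p.2.2)).deriv.trans ?_
  simp only [Prod.mk.eta]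

lemma pt_w1 (hu : ContDiff ℝ (⊤ : ℕ∞) u) (hf : ContDiff ℝ (⊤ : ℕ∞) f) (p : ℝ × ℝ × ℝ) :
    pt (sigma1 f u) p = -(1/6) * deriv (deriv f) p.2.2 + deriv f p.2.2 * Dv (1,0,0) u p +
      f p.2.2 * Dv (0,0,1) (Dv (1,0,0) u) p := by
  have dA1 := (contDiff_Dv hu (1,0,0)).differentiable (by simp)
  have hf1 : ContDiff ℝ (⊤ : ℕ∞) (deriv f) :=deriv_smooth hf
  have hfd : HasDerivAt f (deriv f p.2.2) p.2.2 := ((hf.differentiable (by simp)) p.2.2).hasDerivAt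
  have hdf : HasDerivAt (deriv f) (deriv (deriv f) p.2.2) p.2.2 :=
    ((hf1.differentiable (by simp)) p.2.2).hasDerivAt
  unfold pt
  rw [w1_eq hu f]
  refine ((hdf.const_mul (-(1 / 6))).add (hfd.mul (sliceT dA1 p))).deriv.trans ?_
  simp only [Prod.mk.eta]; ring

lemma px_w2 (hu : ContDiff ℝ (⊤ : ℕ∞) u) (f : ℝ → ℝ) (p : ℝ × ℝ × ℝ) :
    px (sigma2 f u) p = (1/2) * deriv f p.2.2 * p.2.1 * Dv (1,0,0) (Dv (1,0,0) u) p +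
      f p.2.2 * Dv (1,0,0) (Dv (0,1,0) u) p := by
  have dA1 := (contDiff_Dv hu (1,0,0)).differentiable (by simp)
  have dA2 := (contDiff_Dv hu (0,1,0)).differentiable (by simp)
  unfold px
  rw [w2_eq hu f]
  refine (((hasDerivAt_const p.1 (-(1 / 12) * deriv (deriv f) p.2.2 * p.2.1)).add
    ((sliceX dA1 p).const_mul ((1 / 2) * deriv f p.2.2 * p.2.1))).add
    ((sliceX dA2 p).const_mul (f p.2.2))).deriv.trans ?_
  ring

lemma py_w2 (hu : ContDiff ℝ (⊤ : ℕ∞) u) (f : ℝ → ℝ) (p : ℝ × ℝ × ℝ) :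
    py (sigma2 f u) p = -(1/12) * deriv (deriv f) p.2.2 +
      (1/2) * deriv f p.2.2 * Dv (1,0,0) u p +
      (1/2) * deriv f p.2.2 * p.2.1 * Dv (0,1,0) (Dv (1,0,0) u) p +
      f p.2.2 * Dv (0,1,0) (Dv (0,1,0) u) p := by
  have dA1 := (contDiff_Dv hu (1,0,0)).differentiable (by simp)
  have dA2 := (contDiff_Dv hu (0,1,0)).differentiable (by simp)
  unfold py
  rw [w2_eq hu f]
  refine ((((hasDerivAt_id p.2.1).const_mul (-(1 / 12) * deriv (deriv f) p.2.2)).add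
    (((hasDerivAt_id p.2.1).const_mul ((1 / 2) * deriv f p.2.2)).mul (sliceY dA1 p))).add
    ((sliceY dA2 p).const_mul (f p.2.2))).deriv.trans ?_
  simp only [Prod.mk.eta, id_eq]; ring

lemma pt_w2 (hu : ContDiff ℝ (⊤ : ℕ∞) u) (hf : ContDiff ℝ (⊤ : ℕ∞) f) (p : ℝ × ℝ × ℝ) :
    pt (sigma2 f u) p = -(1/12) * deriv (deriv (deriv f)) p.2.2 * p.2.1 +
      (1/2) * deriv (deriv f) p.2.2 * p.2.1 * Dv (1,0,0) u p +
      (1/2) * deriv f p.2.2 * p.2.1 * Dv (0,0,1) (Dv (1,0,0) u) p +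
      deriv f p.2.2 * Dv (0,1,0) u p +
      f p.2.2 * Dv (0,0,1) (Dv (0,1,0) u) p := by
  have dA1 := (contDiff_Dv hu (1,0,0)).differentiable (by simp)
  have dA2 := (contDiff_Dv hu (0,1,0)).differentiable (by simp)
  have hf1 : ContDiff ℝ (⊤ : ℕ∞) (deriv f) :=deriv_smooth hf
  have hf2 : ContDiff ℝ (⊤ : ℕ∞) (deriv (deriv f)) :=deriv_smooth hf1
  have hfd : HasDerivAt f (deriv f p.2.2) p.2.2 := ((hf.differentiable (by simp)) p.2.2).hasDerivAt
  have hdf : HasDerivAt (deriv f) (deriv (deriv f) p.2.2) p.2.2 :=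
    ((hf1.differentiable (by simp)) p.2.2).hasDerivAt
  have hdf2 : HasDerivAt (deriv (deriv f)) (deriv (deriv (deriv f)) p.2.2) p.2.2 :=
    ((hf2.differentiable (by simp)) p.2.2).hasDerivAt
  unfold pt
  rw [w2_eq hu f]
  refine ((((hdf2.const_mul (-(1 / 12))).mul_const p.2.1).add
    (((hdf.const_mul (1 / 2)).mul_const p.2.1).mul (sliceT dA1 p))).add
    (hfd.mul (sliceT dA2 p))).deriv.trans ?_
  simp only [Prod.mk.eta]; ring

lemma px_w3 (hu : ContDiff ℝ (⊤ : ℕ∞) u) (g : ℝ → ℝ) (p : ℝ × ℝ × ℝ) :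
    px (sigma3 g u) p =
      deriv (deriv g) p.2.2 * ((1/6) * p.2.1 ^ 2 * Dv (1,0,0) (Dv (1,0,0) u) p - 1/18) +
      deriv g p.2.2 * (Dv (1,0,0) u p + (2/3) * p.2.1 * Dv (1,0,0) (Dv (0,1,0) u) p +
        (1/3) * p.1 * Dv (1,0,0) (Dv (1,0,0) u) p) +
      g p.2.2 * Dv (1,0,0) (Dv (0,0,1) u) p := by
  have du := hu.differentiable (by simp)
  have dA1 := (contDiff_Dv hu (1,0,0)).differentiable (by simp)
  have dA2 := (contDiff_Dv hu (0,1,0)).differentiable (by simp)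
  have dA3 := (contDiff_Dv hu (0,0,1)).differentiable (by simp)
  have H1 := hasDerivAt_const p.1 (-(1 / 36) * deriv (deriv (deriv g)) p.2.2 * p.2.1 ^ 2)
  have H2 := (((sliceX dA1 p).const_mul ((1 / 6) * p.2.1 ^ 2)).sub
      ((hasDerivAt_id p.1).const_mul (1 / 18))).const_mul (deriv (deriv g) p.2.2)
  have H3 := ((((sliceX du p).const_mul (2 / 3)).add
      ((sliceX dA2 p).const_mul ((2 / 3) * p.2.1))).add
        (((hasDerivAt_id p.1).const_mul (1 / 3)).mul (sliceX dA1 p))).const_mul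
          (deriv g p.2.2)
  have H4 := (sliceX dA3 p).const_mul (g p.2.2)
  unfold px
  rw [w3_eq hu g]
  refine (((H1.add H2).add H3).add H4).deriv.trans ?_
  simp only [Prod.mk.eta, id_eq]; ring

lemma py_w3 (hu : ContDiff ℝ (⊤ : ℕ∞) u) (g : ℝ → ℝ) (p : ℝ × ℝ × ℝ) :
    py (sigma3 g u) p =
      -(1/18) * deriv (deriv (deriv g)) p.2.2 * p.2.1 +
      deriv (deriv g) p.2.2 * ((1/3) * p.2.1 * Dv (1,0,0) u p +
        (1/6) * p.2.1 ^ 2 * Dv (0,1,0) (Dv (1,0,0) u) p) +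
      deriv g p.2.2 * ((4/3) * Dv (0,1,0) u p + (2/3) * p.2.1 * Dv (0,1,0) (Dv (0,1,0) u) p +
        (1/3) * p.1 * Dv (0,1,0) (Dv (1,0,0) u) p) +
      g p.2.2 * Dv (0,1,0) (Dv (0,0,1) u) p := by
  have du := hu.differentiable (by simp)
  have dA1 := (contDiff_Dv hu (1,0,0)).differentiable (by simp)
  have dA2 := (contDiff_Dv hu (0,1,0)).differentiable (by simp)
  have dA3 := (contDiff_Dv hu (0,0,1)).differentiable (by simp)
  have H1 := ((hasDerivAt_id p.2.1).pow 2).const_mul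
      (-(1 / 36) * deriv (deriv (deriv g)) p.2.2)
  have H2 := (((((hasDerivAt_id p.2.1).pow 2).const_mul (1 / 6)).mul (sliceY dA1 p)).sub
      (hasDerivAt_const p.2.1 ((1 / 18) * p.1))).const_mul (deriv (deriv g) p.2.2)
  have H3 := ((((sliceY du p).const_mul (2 / 3)).add
      (((hasDerivAt_id p.2.1).const_mul (2 / 3)).mul (sliceY dA2 p))).add
        ((sliceY dA1 p).const_mul ((1 / 3) * p.1))).const_mul (deriv g p.2.2)
  have H4 := (sliceY dA3 p).const_mul (g p.2.2)
  unfold py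
  rw [w3_eq hu g]
  refine (((H1.add H2).add H3).add H4).deriv.trans ?_
  simp only [Prod.mk.eta, id_eq, Pi.pow_apply]; ring

end Partials

/-- `[σ¹(f), σ³(g)] = σ¹((1/3)f g' − f' g)` and
`[σ²(f), σ³(g)] = σ²((2/3)f g' − f' g)`. -/
theorem stmt16 (f g : ℝ → ℝ) (hf : ContDiff ℝ (⊤ : ℕ∞) f) (hg : ContDiff ℝ (⊤ : ℕ∞) g)
    (u : ℝ × ℝ × ℝ → ℝ) (hu : ContDiff ℝ (⊤ : ℕ∞) u) (p : ℝ × ℝ × ℝ) :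
    gBracket (sigma1 f) (sigma3 g) u p =
      sigma1 (fun t => (1 / 3) * f t * deriv g t - deriv f t * g t) u p ∧
    gBracket (sigma2 f) (sigma3 g) u p =
      sigma2 (fun t => (2 / 3) * f t * deriv g t - deriv f t * g t) u p := by
  have du := hu.differentiable (by simp)
  have hf1 : ContDiff ℝ (⊤ : ℕ∞) (deriv f) := deriv_smooth hf
  have hf2 : ContDiff ℝ (⊤ : ℕ∞) (deriv (deriv f)) := deriv_smooth hf1
  have hg1 : ContDiff ℝ (⊤ : ℕ∞) (deriv g) := deriv_smooth hg
  have hg2 : ContDiff ℝ (⊤ : ℕ∞) (deriv (deriv g)) := deriv_smooth hg1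
  have hg3 : ContDiff ℝ (⊤ : ℕ∞) (deriv (deriv (deriv g))) := deriv_smooth hg2
  have hprojt : ContDiff ℝ (⊤ : ℕ∞) (fun q : ℝ × ℝ × ℝ => q.2.2) := contDiff_snd.snd
  have hprojy : ContDiff ℝ (⊤ : ℕ∞) (fun q : ℝ × ℝ × ℝ => q.2.1) := contDiff_snd.fst
  have hprojx : ContDiff ℝ (⊤ : ℕ∞) (fun q : ℝ × ℝ × ℝ => q.1) := contDiff_fst
  have hw1 : ContDiff ℝ (⊤ : ℕ∞) (sigma1 f u) := by
    rw [w1_eq hu f]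
    exact (contDiff_const.mul (hf1.comp hprojt)).add ((hf.comp hprojt).mul (contDiff_Dv hu _))
  have hw2 : ContDiff ℝ (⊤ : ℕ∞) (sigma2 f u) := by
    rw [w2_eq hu f]
    exact (((contDiff_const.mul (hf2.comp hprojt)).mul hprojy).add
      (((contDiff_const.mul (hf1.comp hprojt)).mul hprojy).mul (contDiff_Dv hu _))).add
      ((hf.comp hprojt).mul (contDiff_Dv hu _))
  have hw3 : ContDiff ℝ (⊤ : ℕ∞) (sigma3 g u) := by
    rw [w3_eq hu g]
    refine ((((((contDiff_const.mul (hg3.comp hprojt)).mul (hprojy.pow 2)).add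
      ((hg2.comp hprojt).mul
        (((contDiff_const.mul (hprojy.pow 2)).mul (contDiff_Dv hu _)).sub
          (contDiff_const.mul hprojx)))).add
      ((hg1.comp hprojt).mul
        (((contDiff_const.mul hu).add
          ((contDiff_const.mul hprojy).mul (contDiff_Dv hu _))).add
          ((contDiff_const.mul hprojx).mul (contDiff_Dv hu _))))).add
      ((hg.comp hprojt).mul (contDiff_Dv hu _))))
  have dw1 := hw1.differentiable (by simp)
  have dw2 := hw2.differentiable (by simp)
  have dw3 := hw3.differentiable (by simp)
  have hFd : HasDerivAt f (deriv f p.2.2) p.2.2 := (hf.differentiable (by simp) p.2.2).hasDerivAt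
  have hF1d : HasDerivAt (deriv f) (deriv (deriv f) p.2.2) p.2.2 :=
    (hf1.differentiable (by simp) p.2.2).hasDerivAt
  have hF2d : HasDerivAt (deriv (deriv f)) (deriv (deriv (deriv f)) p.2.2) p.2.2 :=
    (hf2.differentiable (by simp) p.2.2).hasDerivAt
  have hGd : HasDerivAt g (deriv g p.2.2) p.2.2 := (hg.differentiable (by simp) p.2.2).hasDerivAt
  have hG1d : HasDerivAt (deriv g) (deriv (deriv g) p.2.2) p.2.2 :=
    (hg1.differentiable (by simp) p.2.2).hasDerivAt
  have hG2d : HasDerivAt (deriv (deriv g)) (deriv (deriv (deriv g)) p.2.2) p.2.2 :=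
    (hg2.differentiable (by simp) p.2.2).hasDerivAt
  have s21 : Dv (0,1,0) (Dv (1,0,0) u) p = Dv (1,0,0) (Dv (0,1,0) u) p := Dv_symm hu p _ _
  have s31 : Dv (0,0,1) (Dv (1,0,0) u) p = Dv (1,0,0) (Dv (0,0,1) u) p := Dv_symm hu p _ _
  have s32 : Dv (0,0,1) (Dv (0,1,0) u) p = Dv (0,1,0) (Dv (0,0,1) u) p := Dv_symm hu p _ _
  constructor
  · -- first identity
    have Hh : HasDerivAt (fun t => 1 / 3 * f t * deriv g t - deriv f t * g t)
        (1 / 3 * deriv f p.2.2 * deriv g p.2.2 + 1 / 3 * f p.2.2 * deriv (deriv g) p.2.2 -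
          (deriv (deriv f) p.2.2 * g p.2.2 + deriv f p.2.2 * deriv g p.2.2)) p.2.2 :=
      ((hFd.const_mul (1 / 3)).mul hG1d).sub (hF1d.mul hGd)
    unfold gBracket
    rw [gateaux_sigma1 du dw3 f p, gateaux_sigma3 du dw1 g p]
    rw [← px_eq dw3 p, ← px_eq dw1 p, ← py_eq dw1 p, ← pt_eq dw1 p]
    rw [px_w3 hu g p, px_w1 hu f p, py_w1 hu f p, pt_w1 hu hf p]
    simp only [sigma1]
    rw [px_eq du p, Hh.deriv, s21, s31]
    ring
  · -- second identity
    have hder : deriv (fun t => 2 / 3 * f t * deriv g t - deriv f t * g t) =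
        fun s => 2 / 3 * deriv f s * deriv g s + 2 / 3 * f s * deriv (deriv g) s -
          (deriv (deriv f) s * g s + deriv f s * deriv g s) := by
      funext s
      exact ((((hf.differentiable (by simp) s).hasDerivAt.const_mul (2 / 3)).mul
        ((hg1.differentiable (by simp) s).hasDerivAt)).sub
        (((hf1.differentiable (by simp) s).hasDerivAt).mul
          ((hg.differentiable (by simp) s).hasDerivAt))).deriv
    have H2d : HasDerivAt (fun s => 2 / 3 * deriv f s * deriv g s +
        2 / 3 * f s * deriv (deriv g) s -
          (deriv (deriv f) s * g s + deriv f s * deriv g s))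
        ((2 / 3 * deriv (deriv f) p.2.2 * deriv g p.2.2 +
            2 / 3 * deriv f p.2.2 * deriv (deriv g) p.2.2 +
          (2 / 3 * deriv f p.2.2 * deriv (deriv g) p.2.2 +
            2 / 3 * f p.2.2 * deriv (deriv (deriv g)) p.2.2)) -
          (deriv (deriv (deriv f)) p.2.2 * g p.2.2 + deriv (deriv f) p.2.2 * deriv g p.2.2 +
            (deriv (deriv f) p.2.2 * deriv g p.2.2 +
              deriv f p.2.2 * deriv (deriv g) p.2.2))) p.2.2 :=
      ((((hF1d.const_mul (2 / 3)).mul hG1d).add ((hFd.const_mul (2 / 3)).mul hG2d)).sub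
        ((hF2d.mul hGd).add (hF1d.mul hG1d)))
    unfold gBracket
    rw [gateaux_sigma2 du dw3 f p, gateaux_sigma3 du dw2 g p]
    rw [← px_eq dw3 p, ← py_eq dw3 p, ← px_eq dw2 p, ← py_eq dw2 p, ← pt_eq dw2 p]
    rw [px_w3 hu g p, py_w3 hu g p, px_w2 hu f p, py_w2 hu f p, pt_w2 hu hf p]
    simp only [sigma2]
    rw [px_eq du p, py_eq du p, hder]
    beta_reduce
    rw [H2d.deriv, s21, s31, s32]
    ring
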